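/- For real y, z with 0 ≤ y < 1, 0 ≤ z < 1: ∑_{(a,b): a,b ≥ 1, gcd(a,b)=1} (1/a) · log(1 - y^a z^b) = (z/(1-z)) · log(1 - y). Equivalently, ∏_{gcd(a,b)=1, a,b≥1} (1 - y^a z^b)^{1/a} = (1-y)^{z/(1-z)}. -/

import Mathlib

/-!
Expanding `log (1 - x) = -∑ xᵏ / k` at `x = yᵃ zᵇ` turns the left-hand side into
`-∑ y^(ak) z^(bk) / (ak)` over coprime `(a, b)` and `k ≥ 1`. As `(a, b, k) ↦ (ak, bk)` is a
bijection onto all pairs of positive integers, this is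
`-∑ yᵐ / m · zⁿ = z / (1 - z) · log (1 - y)`.
Exponentiating gives the product form.
-/

open Real

def coprimePairMul (q : {p : ℕ+ × ℕ+ // Nat.gcd p.1 p.2 = 1} × ℕ+) : ℕ+ × ℕ+ :=
  (q.1.val.1 * q.2, q.1.val.2 * q.2)

lemma coprimePairMul_injective : Function.Injective coprimePairMul := by
  rintro ⟨⟨⟨a, b⟩, hab⟩, k⟩ ⟨⟨⟨a', b'⟩, hab'⟩, k'⟩ h
  simp only [coprimePairMul, Prod.mk.injEq] at h
  obtain ⟨ha, hb⟩ := h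
  -- `k` is recovered as `gcd (a k) (b k)`
  have hk : k = k' := PNat.coe_injective <| by
    simpa [Nat.gcd_mul_right, hab, hab'] using congrArg (fun p : ℕ+ × ℕ+ => Nat.gcd p.1 p.2)
      (Prod.ext ha hb : ((a * k, b * k) : ℕ+ × ℕ+) = (a' * k', b' * k'))
  subst hk
  rw [mul_left_inj] at ha hb
  subst ha hb
  rfl

lemma coprimePairMul_surjective : Function.Surjective coprimePairMul := by
  rintro ⟨m, n⟩
  set g := PNat.gcd m n
  have hm := PNat.mul_div_exact (PNat.gcd_dvd_left m n)
  have hn := PNat.mul_div_exact (PNat.gcd_dvd_right m n)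
  have hcop : Nat.gcd (m.divExact g) (n.divExact g) = 1 := by
    have h := Nat.gcd_mul_left g (m.divExact g) (n.divExact g)
    rw [← PNat.mul_coe, ← PNat.mul_coe, hm, hn, ← PNat.gcd_coe] at h
    exact (Nat.mul_eq_left g.ne_zero).1 h.symm
  refine ⟨⟨⟨(m.divExact g, n.divExact g), hcop⟩, g⟩, ?_⟩
  simp only [coprimePairMul]
  rw [mul_comm _ g, hm, mul_comm _ g, hn]

lemma hasSum_pnat_pow_div_log {x : ℝ} (hx : |x| < 1) :
    HasSum (fun k : ℕ+ => x ^ (k : ℕ) / k) (-log (1 - x)) := by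
  rw [hasSum_pnat_iff_hasSum_succ (f := fun n : ℕ => x ^ n / n)]
  exact_mod_cast hasSum_pow_div_log_of_abs_lt_one hx

lemma hasSum_pnat_geometric {K : Type*} [NormedField K] {ξ : K} (h : ‖ξ‖ < 1) :
    HasSum (fun k : ℕ+ => ξ ^ (k : ℕ)) (ξ / (1 - ξ)) := by
  rw [hasSum_pnat_iff_hasSum_succ (f := fun n : ℕ => ξ ^ n), div_eq_mul_inv]
  simpa only [pow_succ'] using (hasSum_geometric_of_norm_lt_one h).mul_left ξ

section

variable {y z : ℝ}

lemma abs_pow_mul_pow_lt_one (hy : |y| < 1) (hz : |z| < 1) (a : ℕ+) (b : ℕ) :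
    |y ^ (a : ℕ) * z ^ b| < 1 := by
  rw [abs_mul, abs_pow, abs_pow]
  exact mul_lt_one_of_nonneg_of_lt_one_left (by positivity)
    (pow_lt_one₀ (abs_nonneg y) hy a.ne_zero) (pow_le_one₀ (abs_nonneg z) hz.le)

lemma hasSum_pnat_prod_pow_div_mul_pow (hy : |y| < 1) (hz : |z| < 1) :
    HasSum (fun p : ℕ+ × ℕ+ => y ^ (p.1 : ℕ) / p.1 * z ^ (p.2 : ℕ))
      (-log (1 - y) * (z / (1 - z))) := by
  have hY := hasSum_pnat_pow_div_log hy
  have hZ := hasSum_pnat_geometric (K := ℝ) hz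
  have hs := summable_mul_of_summable_norm (R := ℝ) hY.summable.norm hZ.summable.norm
  exact hY.mul hZ hs

lemma hasSum_pnat_pow_mul_div_mul_pow_mul (hy : |y| < 1) (hz : |z| < 1) (a b : ℕ+) :
    HasSum (fun k : ℕ+ => y ^ (a * k : ℕ) / (a * k : ℕ) * z ^ (b * k : ℕ))
      (-(1 / (a : ℝ) * log (1 - y ^ (a : ℕ) * z ^ (b : ℕ)))) := by
  rw [← mul_neg]
  refine ((hasSum_pnat_pow_div_log (abs_pow_mul_pow_lt_one hy hz a b)).mul_left _).congr_fun
    fun k => ?_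
  rw [mul_pow, ← pow_mul, ← pow_mul]
  push_cast
  field_simp

theorem hasSum_coprime_div_mul_log (hy : |y| < 1) (hz : |z| < 1) :
    HasSum (fun p : {p : ℕ+ × ℕ+ // Nat.gcd p.1 p.2 = 1} =>
        1 / (p.val.1 : ℝ) * log (1 - y ^ (p.val.1 : ℕ) * z ^ (p.val.2 : ℕ)))
      (z / (1 - z) * log (1 - y)) := by
  have hpairs := (Equiv.ofBijective _ ⟨coprimePairMul_injective,
    coprimePairMul_surjective⟩).hasSum_iff.2 (hasSum_pnat_prod_pow_div_mul_pow hy hz)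
  have := hpairs.prod_fiberwise fun p => hasSum_pnat_pow_mul_div_mul_pow_mul hy hz p.val.1 p.val.2
  rw [mul_comm, ← neg_neg (log (1 - y) * _), ← neg_mul]
  simpa only [neg_neg] using this.neg

theorem hasProd_coprime_rpow (hy : |y| < 1) (hz : |z| < 1) :
    HasProd (fun p : {p : ℕ+ × ℕ+ // Nat.gcd p.1 p.2 = 1} =>
        (1 - y ^ (p.val.1 : ℕ) * z ^ (p.val.2 : ℕ)) ^ (1 / (p.val.1 : ℝ)))
      ((1 - y) ^ (z / (1 - z))) := by
  have hpos (p : {p : ℕ+ × ℕ+ // Nat.gcd p.1 p.2 = 1}) :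
      0 < 1 - y ^ (p.val.1 : ℕ) * z ^ (p.val.2 : ℕ) :=
    sub_pos.2 (abs_lt.1 (abs_pow_mul_pow_lt_one hy hz _ _)).2
  simp only [rpow_def_of_pos (hpos _), rpow_def_of_pos (sub_pos.2 (abs_lt.1 hy).2)]
  rw [mul_comm (log (1 - y))]
  exact (hasSum_coprime_div_mul_log hy hz).rexp.congr_fun fun p => by
    rw [Function.comp_apply, mul_comm]

end

theorem stmt_14 (y z : ℝ) (hy0 : 0 ≤ y) (hy1 : y < 1) (hz0 : 0 ≤ z) (hz1 : z < 1) :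
    (∑' p : {p : ℕ+ × ℕ+ // Nat.gcd (p.1 : ℕ) (p.2 : ℕ) = 1},
        (1 / (p.val.1 : ℝ)) * Real.log (1 - y ^ (p.val.1 : ℕ) * z ^ (p.val.2 : ℕ)) =
      z / (1 - z) * Real.log (1 - y)) ∧
    (∏' p : {p : ℕ+ × ℕ+ // Nat.gcd (p.1 : ℕ) (p.2 : ℕ) = 1},
        (1 - y ^ (p.val.1 : ℕ) * z ^ (p.val.2 : ℕ)) ^ ((1 : ℝ) / (p.val.1 : ℝ)) =
      (1 - y) ^ (z / (1 - z))) := by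
  have hy : |y| < 1 := abs_lt.2 ⟨by linarith, hy1⟩
  have hz : |z| < 1 := abs_lt.2 ⟨by linarith, hz1⟩
  exact ⟨(hasSum_coprime_div_mul_log hy hz).tsum_eq, (hasProd_coprime_rpow hy hz).tprod_eq⟩
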